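/- Let V be an 𝔽₂-linear subspace of 𝔽₂^{2n} and let S' ⊆ 𝔽₂^{2n} be a finite nonempty set such that |V| ≤ |S'| and S' is covered by at most M translates of V, i.e., there exist c₁, …, c_M ∈ 𝔽₂^{2n} with S' ⊆ ⋃_{i=1}^{M} (cᵢ + V). Then nac(V) ≤ 2M · nac(2S'), where 2S' = {s + s' : s, s' ∈ S'}. -/

import Mathlib

open Finset
open scoped Pointwise

/-- The symplectic product on `𝔽₂^{2n}`: `[x,y] = ⟨x₁,y₂⟩ + ⟨x₂,y₁⟩`. -/
def sympl (n : ℕ) (x y : (Fin n → ZMod 2) × (Fin n → ZMod 2)) : ZMod 2 :=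
  (∑ i, x.1 i * y.2 i) + (∑ i, x.2 i * y.1 i)

/-- `nac A`: the maximum cardinality of a finite subset of `A` whose elements
pairwise anticommute (pairwise symplectic product `1`). -/
noncomputable def nac (n : ℕ) (A : Set ((Fin n → ZMod 2) × (Fin n → ZMod 2))) : ℕ :=
  sSup {k | ∃ T : Finset ((Fin n → ZMod 2) × (Fin n → ZMod 2)),
    ↑T ⊆ A ∧ (∀ x ∈ T, ∀ y ∈ T, x ≠ y → sympl n x y = 1) ∧ T.card = k}

private abbrev EE (n : ℕ) := (Fin n → ZMod 2) × (Fin n → ZMod 2)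

private lemma nac_bdd (n : ℕ) (A : Set (EE n)) :
    BddAbove {k | ∃ T : Finset (EE n),
      ↑T ⊆ A ∧ (∀ x ∈ T, ∀ y ∈ T, x ≠ y → sympl n x y = 1) ∧ T.card = k} :=
  ⟨Fintype.card (EE n), by rintro k ⟨T, -, -, rfl⟩; exact T.card_le_univ⟩

private lemma le_nac {n : ℕ} {A : Set (EE n)} {T : Finset (EE n)}
    (h1 : ↑T ⊆ A) (h2 : ∀ x ∈ T, ∀ y ∈ T, x ≠ y → sympl n x y = 1) :
    T.card ≤ nac n A :=
  le_csSup (nac_bdd n A) ⟨T, h1, h2, rfl⟩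

private lemma exists_nac_witness (n : ℕ) (A : Set (EE n)) :
    ∃ T : Finset (EE n), ↑T ⊆ A ∧ (∀ x ∈ T, ∀ y ∈ T, x ≠ y → sympl n x y = 1) ∧
      T.card = nac n A := by
  have h := Nat.sSup_mem (s := {k | ∃ T : Finset (EE n),
      ↑T ⊆ A ∧ (∀ x ∈ T, ∀ y ∈ T, x ≠ y → sympl n x y = 1) ∧ T.card = k})
    ⟨0, ∅, by simp, by simp, by simp⟩ (nac_bdd n A)
  obtain ⟨T, h1, h2, h3⟩ := h
  exact ⟨T, h1, h2, h3⟩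

private lemma sympl_add_left {n : ℕ} (x y z : EE n) :
    sympl n (x + y) z = sympl n x z + sympl n y z := by
  simp only [sympl, Prod.fst_add, Prod.snd_add, Pi.add_apply, add_mul,
    Finset.sum_add_distrib]
  ring

private lemma sympl_add_right {n : ℕ} (x y z : EE n) :
    sympl n x (y + z) = sympl n x y + sympl n x z := by
  simp only [sympl, Prod.fst_add, Prod.snd_add, Pi.add_apply, mul_add,
    Finset.sum_add_distrib]
  ring

private lemma sympl_self {n : ℕ} (x : EE n) : sympl n x x = 0 := by
  have h : ∑ i, x.2 i * x.1 i = ∑ i, x.1 i * x.2 i :=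
    Finset.sum_congr rfl fun i _ => mul_comm _ _
  have h2 : ∀ a : ZMod 2, a + a = 0 := by decide
  simp only [sympl, h]
  exact h2 _

private lemma EE_add_self {n : ℕ} (x : EE n) : x + x = 0 := by
  have h2 : (2 : ZMod 2) = 0 := rfl
  have h := two_smul (ZMod 2) x
  rw [h2, zero_smul] at h
  exact h.symm

private lemma EE_cancel {n : ℕ} {t t' a a' : EE n} (h : t + a = t' + a') :
    t + t' = a + a' := by
  have h1 : (t + a) + (t' + a) = (t' + a') + (t' + a) := by rw [h]
  have e1 : (t + a) + (t' + a) = (t + t') + (a + a) := by abel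
  have e2 : (t' + a') + (t' + a) = (a' + a) + (t' + t') := by abel
  rw [e1, e2, EE_add_self, EE_add_self, add_zero, add_zero] at h1
  rw [h1, add_comm]

/-- if `S'` is covered by at most `M` translates of a subspace `V`
with `|V| ≤ |S'|`, then `nac(V) ≤ 2M·nac(2S')`. -/
theorem stmt_18 (n : ℕ) (hn : 1 ≤ n)
    (V : Submodule (ZMod 2) ((Fin n → ZMod 2) × (Fin n → ZMod 2)))
    (S' : Set ((Fin n → ZMod 2) × (Fin n → ZMod 2))) (hfin : S'.Finite)
    (hne : S'.Nonempty) (hVS : Nat.card V ≤ Nat.card S')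
    (M : ℕ) (hM : 1 ≤ M) (c : Fin M → (Fin n → ZMod 2) × (Fin n → ZMod 2))
    (hcov : S' ⊆ ⋃ i, (c i +ᵥ (V : Set ((Fin n → ZMod 2) × (Fin n → ZMod 2))))) :
    nac n (V : Set ((Fin n → ZMod 2) × (Fin n → ZMod 2))) ≤ 2 * M * nac n (S' + S') := by
  classical
  set m := nac n (S' + S') with hm
  -- `m ≥ 1` since `S' + S'` is nonempty
  obtain ⟨s₀, hs₀⟩ := hne
  have hm1 : 1 ≤ m := by
    have : ({s₀ + s₀} : Finset (EE n)).card ≤ m := by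
      apply le_nac
      · intro x hx
        simp only [coe_singleton, Set.mem_singleton_iff] at hx
        rw [hx]
        exact Set.add_mem_add hs₀ hs₀
      · intro x hx y hy hxy
        simp only [mem_singleton] at hx hy
        exact absurd (hx.trans hy.symm) hxy
    simpa using this
  -- optimal anticommuting set in V
  obtain ⟨T, hTV, hTanti, hTcard⟩ := exists_nac_witness n (V : Set (EE n))
  by_contra hcon
  push_neg at hcon
  set k := nac n (V : Set (EE n)) with hk
  have hkM : M * m + M < k := by
    have : M * m + M ≤ 2 * M * m := by nlinarith
    omega
  -- pigeonhole: a translate capturing at least `|S'|/M` of `S'`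
  haveI : Nonempty (Fin M) := ⟨⟨0, hM⟩⟩
  set A : Fin M → Finset (EE n) := fun i =>
    hfin.toFinset.filter (fun x => x ∈ c i +ᵥ (V : Set (EE n))) with hA
  obtain ⟨i₀, -, hi₀max⟩ := Finset.exists_max_image (univ : Finset (Fin M))
    (fun i => (A i).card) univ_nonempty
  have hcard_chain : Nat.card V ≤ M * (A i₀).card := by
    have h1 : hfin.toFinset ⊆ (univ : Finset (Fin M)).biUnion A := by
      intro x hx
      have hxS : x ∈ S' := hfin.mem_toFinset.mp hx
      obtain ⟨t, ⟨i, rfl⟩, hxt⟩ := hcov hxS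
      exact Finset.mem_biUnion.mpr ⟨i, mem_univ i,
        Finset.mem_filter.mpr ⟨hfin.mem_toFinset.mpr hxS, hxt⟩⟩
    have h2 : hfin.toFinset.card ≤ ∑ i, (A i).card :=
      le_trans (Finset.card_le_card h1) (Finset.card_biUnion_le)
    have h3 : ∑ i, (A i).card ≤ M * (A i₀).card := by
      calc ∑ i, (A i).card ≤ (univ : Finset (Fin M)).card • (A i₀).card :=
            Finset.sum_le_card_nsmul _ _ _ (fun i hi => hi₀max i hi)
        _ = M * (A i₀).card := by simp [mul_comm]
    have h4 : Nat.card S' = hfin.toFinset.card := by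
      rw [Nat.card_coe_set_eq, Set.ncard_eq_toFinset_card S' hfin]
    omega
  set A₀ : Finset (EE n) := A i₀ with hA₀
  have hA₀S : ∀ a ∈ A₀, a ∈ S' := fun a ha => hfin.mem_toFinset.mp (mem_filter.mp ha).1
  have hA₀c : ∀ a ∈ A₀, a ∈ c i₀ +ᵥ (V : Set (EE n)) := fun a ha => (mem_filter.mp ha).2
  -- the coset as a finset
  set cosetF : Finset (EE n) := (Set.toFinite (c i₀ +ᵥ (V : Set (EE n)))).toFinset
    with hcosetF
  have hcosetcard : cosetF.card = Nat.card V := by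
    rw [hcosetF, ← Set.ncard_eq_toFinset_card _ (Set.toFinite _), Set.ncard_vadd_set,
      ← Nat.card_coe_set_eq]
    rfl
  -- key pigeonhole claim: any M+1 elements of T contain an "edge"
  have key : ∀ u : Finset (EE n), u ⊆ T → u.card = M + 1 →
      ∃ t ∈ u, ∃ t' ∈ u, t ≠ t' ∧ t + t' ∈ S' + S' := by
    intro u huT hucard
    by_contra hcontra
    push_neg at hcontra
    set F : EE n → Finset (EE n) := fun t => A₀.image (t + ·) with hF
    have hFcard : ∀ t, (F t).card = A₀.card := fun t =>
      Finset.card_image_of_injective _ (fun a b hab => by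
        exact add_left_cancel hab)
    have hFsub : ∀ t ∈ u, F t ⊆ cosetF := by
      intro t ht x hx
      obtain ⟨a, ha, rfl⟩ := Finset.mem_image.mp hx
      obtain ⟨v, hv, hva⟩ := hA₀c a ha
      have htV : t ∈ (V : Set (EE n)) := hTV (huT ht)
      rw [Set.Finite.mem_toFinset]
      refine ⟨t + v, V.add_mem htV hv, ?_⟩
      simp only [vadd_eq_add] at hva ⊢
      rw [← hva]
      abel
    have hdisj : ∀ t ∈ u, ∀ t' ∈ u, t ≠ t' → Disjoint (F t) (F t') := by
      intro t ht t' ht' htt'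
      rw [Finset.disjoint_left]
      intro x hxt hxt'
      obtain ⟨a, ha, rfl⟩ := Finset.mem_image.mp hxt
      obtain ⟨a', ha', haa'⟩ := Finset.mem_image.mp hxt'
      have : t + t' = a + a' := EE_cancel haa'.symm
      exact hcontra t ht t' ht' htt'
        (this ▸ Set.add_mem_add (hA₀S a ha) (hA₀S a' ha'))
    have hbig : (u.biUnion F).card = (M + 1) * A₀.card := by
      rw [Finset.card_biUnion hdisj]
      rw [Finset.sum_congr rfl (fun t _ => hFcard t), Finset.sum_const, hucard,
        smul_eq_mul]
    have hsub : u.biUnion F ⊆ cosetF := by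
      intro x hx
      obtain ⟨t, ht, hxt⟩ := Finset.mem_biUnion.mp hx
      exact hFsub t ht hxt
    have h5 : (M + 1) * A₀.card ≤ Nat.card V := by
      rw [← hbig, ← hcosetcard]
      exact Finset.card_le_card hsub
    have hVpos : 0 < Nat.card V := Nat.card_pos
    have h6 : M * A₀.card + A₀.card ≤ M * A₀.card := by
      calc M * A₀.card + A₀.card = (M + 1) * A₀.card := by ring
        _ ≤ Nat.card V := h5
        _ ≤ M * A₀.card := hcard_chain
    have h7 : A₀.card = 0 := by omega
    rw [h7, Nat.mul_zero] at hcard_chain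
    omega
  -- maximal "independent" subset
  set indep : Finset (EE n) → Prop := fun u =>
    ∀ x ∈ u, ∀ y ∈ u, x ≠ y → x + y ∉ S' + S' with hindep
  set 𝒮 : Finset (Finset (EE n)) := T.powerset.filter indep with h𝒮
  have hSemp : ∅ ∈ 𝒮 := by
    rw [h𝒮, mem_filter]
    exact ⟨Finset.empty_mem_powerset T, fun x hx => absurd hx (Finset.notMem_empty x)⟩
  obtain ⟨I, hI𝒮, hImax⟩ : ∃ I ∈ 𝒮, ∀ x ∈ 𝒮, ¬ I < x := by
    obtain ⟨I, hI⟩ := Finset.exists_maximal (s := 𝒮) ⟨∅, hSemp⟩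
    exact ⟨I, hI.1, fun x hx hlt => (lt_iff_le_not_ge.mp hlt).2 (hI.2 hx hlt.le)⟩
  have hIT : I ⊆ T := Finset.mem_powerset.mp (mem_filter.mp hI𝒮).1
  have hIind : indep I := (mem_filter.mp hI𝒮).2
  have hIM : I.card ≤ M := by
    by_contra hIM
    push_neg at hIM
    obtain ⟨u, huI, hucard⟩ := Finset.exists_subset_card_eq hIM
    obtain ⟨t, ht, t', ht', htt', hedge⟩ := key u (huI.trans hIT) hucard
    exact hIind t (huI ht) t' (huI ht') htt' hedge
  -- every element of T \ I has a "neighbor" in I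
  have hnb : ∀ t ∈ T \ I, ∃ y ∈ I, t + y ∈ S' + S' := by
    intro t ht
    rw [Finset.mem_sdiff] at ht
    have hins : insert t I ∉ 𝒮 := by
      intro hmem
      exact hImax _ hmem (Finset.ssubset_insert ht.2)
    have hinsT : insert t I ⊆ T := Finset.insert_subset ht.1 hIT
    have hnotindep : ¬ indep (insert t I) := by
      intro hind
      exact hins (mem_filter.mpr ⟨Finset.mem_powerset.mpr hinsT, hind⟩)
    have hnotindep' : ¬ (∀ x ∈ insert t I, ∀ y ∈ insert t I, x ≠ y → x + y ∉ S' + S') :=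
      hnotindep
    push_neg at hnotindep'
    obtain ⟨x, hx, y, hy, hxy, hedge⟩ := hnotindep'
    rw [Finset.mem_insert] at hx hy
    rcases hx with rfl | hx
    · rcases hy with rfl | hy
      · exact absurd rfl hxy
      · exact ⟨y, hy, hedge⟩
    · rcases hy with rfl | hy
      · exact ⟨x, hx, by rwa [add_comm _ x]⟩
      · exact absurd hedge (hIind x hx y hy hxy)
  -- the neighbor function
  set f : EE n → EE n := fun t =>
    if h : ∃ y ∈ I, t + y ∈ S' + S' then h.choose else t with hf
  have hfmem : ∀ t ∈ T \ I, f t ∈ I ∧ t + f t ∈ S' + S' := by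
    intro t ht
    have h := hnb t ht
    rw [hf]
    simp only [dif_pos h]
    exact ⟨h.choose_spec.1, h.choose_spec.2⟩
  -- pigeonhole on fibers
  have hcard_sdiff : (T \ I).card = k - I.card := by
    rw [Finset.card_sdiff_of_subset hIT, hTcard]
  have hple : I.card * m < (T \ I).card := by
    have h1 : I.card * m ≤ M * m := Nat.mul_le_mul_right m hIM
    omega
  obtain ⟨y, hyI, hyfib⟩ := Finset.exists_lt_card_fiber_of_mul_lt_card_of_maps_to
    (fun t ht => (hfmem t ht).1) hple
  set fib : Finset (EE n) := (T \ I).filter (fun t => f t = y) with hfib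
  set X : Finset (EE n) := fib.image (y + ·) with hX
  have hXcard : X.card = fib.card :=
    Finset.card_image_of_injective _ (fun a b hab => by exact add_left_cancel hab)
  have hfibT : ∀ t ∈ fib, t ∈ T ∧ t ∉ I ∧ y + t ∈ S' + S' := by
    intro t ht
    rw [hfib, mem_filter, Finset.mem_sdiff] at ht
    obtain ⟨⟨htT, htI⟩, hfty⟩ := ht
    have := (hfmem t (Finset.mem_sdiff.mpr ⟨htT, htI⟩)).2
    rw [hfty] at this
    exact ⟨htT, htI, by rw [add_comm y t]; exact this⟩
  have hXle : X.card ≤ m := by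
    apply le_nac
    · intro x hx
      rw [Finset.coe_image] at hx
      obtain ⟨t, ht, rfl⟩ := hx
      exact (hfibT t ht).2.2
    · intro x hx y' hy' hxy'
      obtain ⟨t, ht, rfl⟩ := Finset.mem_image.mp hx
      obtain ⟨t', ht', rfl⟩ := Finset.mem_image.mp hy'
      have htt' : t ≠ t' := fun h => hxy' (by rw [h])
      have hyT : y ∈ T := hIT hyI
      have htT := (hfibT t ht).1
      have ht'T := (hfibT t' ht').1
      have hyt : y ≠ t := fun h => (hfibT t ht).2.1 (h ▸ hyI)
      have hyt' : y ≠ t' := fun h => (hfibT t' ht').2.1 (h ▸ hyI)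
      rw [sympl_add_left, sympl_add_right, sympl_add_right, sympl_self]
      rw [hTanti y hyT t' ht'T hyt', hTanti t htT y hyT (Ne.symm hyt),
        hTanti t htT t' ht'T htt']
      decide
  rw [hXcard] at hXle
  omega
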